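/- Let S ⊂ ℝᵏ be a bounded convex set with S ⊂ B(0,R), and suppose the k-dimensional Lebesgue measure of the polar S° is less than c. Then S contains the ball B(0,r) with r = |B^{k−1}(0,1)| / (2c(2R)^{k−1}), where |B^{k−1}(0,1)| is the volume of the unit ball in ℝ^{k−1}. -/

import Mathlib

/-!
If a point `z` of `B(0, r)` lay outside the closure of `S`, a hyperplane `⟪x, u⟫ = s` with
`s < ⟪z, u⟫ < r` would separate it from `S`. Rotating `u` to the first coordinate axis, the
polar `S°` then contains the cylinder `0 < y₀ < 1/(2s)`, `|y'| < 1/(2R)`, whose volume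
`|B^{k-1}(0,1)| / (2s(2R)^{k-1})` is at least `c` as soon as `s ≤ r`. Hence `B(0, r)` lies in the
closure of `S`, and so in `S`, since a convex set in finite dimension has the same interior as its
closure.
-/

open scoped RealInnerProductSpace
open MeasureTheory

/-- The polar of a set `S ⊆ ℝᵏ`. -/
def realPolar {n : ℕ} (S : Set (EuclideanSpace ℝ (Fin n))) :
    Set (EuclideanSpace ℝ (Fin n)) :=
  {y | ∀ x ∈ S, ⟪x, y⟫ ≤ 1}

open Metric Set

theorem Convex.interior_closure_eq_interior {E : Type*} [NormedAddCommGroup E] [NormedSpace ℝ E]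
    [FiniteDimensional ℝ E] {s : Set E} (hs : Convex ℝ s) :
    interior (closure s) = interior s := by
  rcases (interior (closure s)).eq_empty_or_nonempty with h | h
  · exact h ▸ (subset_empty_iff.mp (h ▸ interior_mono subset_closure)).symm
  · refine hs.interior_closure_eq_interior_of_nonempty_interior ?_
    rw [hs.closure.interior_nonempty_iff_affineSpan_eq_top] at h
    rw [hs.interior_nonempty_iff_affineSpan_eq_top, ← top_le_iff, ← h]
    exact affineSpan_le.mpr <|
      closure_minimal (subset_affineSpan ℝ s) (affineSpan ℝ s).closed_of_finiteDimensional

theorem exists_unit_inner_lt_of_notMem {E : Type*} [NormedAddCommGroup E] [InnerProductSpace ℝ E]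
    [CompleteSpace E] {C : Set E} (hC : Convex ℝ C) (hCc : IsClosed C) (hne : C.Nonempty)
    {z : E} (hz : z ∉ C) :
    ∃ u : E, ‖u‖ = 1 ∧ ∃ s, (∀ x ∈ C, ⟪x, u⟫ < s) ∧ s < ⟪z, u⟫ := by
  obtain ⟨f, t, hfC, hfz⟩ := geometric_hahn_banach_closed_point hC hCc hz
  set v := (InnerProductSpace.toDual ℝ E).symm f
  have hv : ∀ w, ⟪w, v⟫ = f w := fun w => by
    rw [real_inner_comm]; exact InnerProductSpace.toDual_symm_apply
  have hv0 : v ≠ 0 := by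
    rintro h
    obtain ⟨x, hx⟩ := hne
    have hx' := hfC x hx
    rw [← hv, h, inner_zero_right] at hx' hfz
    linarith
  have hvn : 0 < ‖v‖⁻¹ := inv_pos.mpr (norm_pos_iff.mpr hv0)
  refine ⟨‖v‖⁻¹ • v, norm_smul_inv_norm hv0, ‖v‖⁻¹ * t, fun x hx => ?_, ?_⟩ <;>
    rw [real_inner_smul_right, hv]
  · exact mul_lt_mul_of_pos_left (hfC x hx) hvn
  · exact mul_lt_mul_of_pos_left hfz hvn

theorem exists_orthonormalBasis_apply_zero {E : Type*} [NormedAddCommGroup E]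
    [InnerProductSpace ℝ E] [FiniteDimensional ℝ E] {n : ℕ}
    (hn : Module.finrank ℝ E = n + 1) {u : E} (hu : ‖u‖ = 1) :
    ∃ B : OrthonormalBasis (Fin (n + 1)) ℝ E, B 0 = u := by
  have hv : Orthonormal ℝ (({0} : Set (Fin (n + 1))).domRestrict fun _ => u) :=
    ⟨fun _ => hu, fun i j hij => absurd (Subsingleton.elim i j) hij⟩
  obtain ⟨B, hB⟩ := hv.exists_orthonormalBasis_extension_of_card_eq (by simpa using hn)
  exact ⟨B, hB 0 rfl⟩

section Polar

variable {m : ℕ}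

def coordCylinder (a b : ℝ) : Set (EuclideanSpace ℝ (Fin (m + 1))) :=
  {y | y 0 ∈ Ioo 0 a ∧ ∑ i : Fin m, y i.succ ^ 2 < b ^ 2}

theorem isOpen_sum_sq_lt (b : ℝ) : IsOpen {w : Fin m → ℝ | ∑ i, w i ^ 2 < b ^ 2} :=
  isOpen_lt (by fun_prop) continuous_const

theorem volume_sum_sq_lt {b : ℝ} (hb : 0 < b) :
    volume {w : Fin m → ℝ | ∑ i, w i ^ 2 < b ^ 2}
      = ENNReal.ofReal (b ^ m) * volume (ball (0 : EuclideanSpace ℝ (Fin m)) 1) := by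
  have hball : ball (0 : EuclideanSpace ℝ (Fin m)) b
      = WithLp.ofLp ⁻¹' {w : Fin m → ℝ | ∑ i, w i ^ 2 < b ^ 2} := by
    ext w
    simp [EuclideanSpace.norm_eq, Real.sqrt_lt' hb]
  rw [← (PiLp.volume_preserving_ofLp (Fin m)).measure_preimage
    (isOpen_sum_sq_lt b).measurableSet.nullMeasurableSet, ← hball,
    Measure.addHaar_ball_of_pos _ _ hb, finrank_euclideanSpace_fin]

theorem coordCylinder_eq_preimage (a b : ℝ) :
    (coordCylinder a b : Set (EuclideanSpace ℝ (Fin (m + 1)))) = WithLp.ofLp ⁻¹'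
      (MeasurableEquiv.piFinSuccAbove (fun _ => ℝ) 0 ⁻¹'
        (Ioo 0 a ×ˢ {w : Fin m → ℝ | ∑ i, w i ^ 2 < b ^ 2})) := by
  ext y
  simp [coordCylinder, MeasurableEquiv.piFinSuccAbove, Fin.tail]

theorem volume_coordCylinder {a b : ℝ} (ha : 0 < a) (hb : 0 < b) :
    volume (coordCylinder a b : Set (EuclideanSpace ℝ (Fin (m + 1))))
      = ENNReal.ofReal (a * b ^ m) * volume (ball (0 : EuclideanSpace ℝ (Fin m)) 1) := by
  have hprod : MeasurableSet (Ioo 0 a ×ˢ {w : Fin m → ℝ | ∑ i, w i ^ 2 < b ^ 2}) :=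
    measurableSet_Ioo.prod (isOpen_sum_sq_lt b).measurableSet
  rw [coordCylinder_eq_preimage, (PiLp.volume_preserving_ofLp _).measure_preimage
      ((MeasurableEquiv.measurable _ hprod).nullMeasurableSet),
    (volume_preserving_piFinSuccAbove (fun _ => ℝ) 0).measure_preimage hprod.nullMeasurableSet,
    Measure.volume_eq_prod, Measure.prod_prod, Real.volume_Ioo, volume_sum_sq_lt hb,
    ENNReal.ofReal_mul ha.le, sub_zero, mul_assoc]

theorem measurableSet_coordCylinder (a b : ℝ) :
    MeasurableSet (coordCylinder a b : Set (EuclideanSpace ℝ (Fin (m + 1)))) := by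
  rw [coordCylinder_eq_preimage]
  exact (measurableSet_Ioo.prod (isOpen_sum_sq_lt b).measurableSet).preimage (by fun_prop)

theorem inner_eq_mul_add_sum_succ (x y : EuclideanSpace ℝ (Fin (m + 1))) :
    ⟪x, y⟫ = x 0 * y 0 + ∑ i : Fin m, x i.succ * y i.succ := by
  simp only [PiLp.inner_apply, RCLike.inner_apply, conj_trivial, Fin.sum_univ_succ, mul_comm]

theorem sum_sq_succ_le_norm_sq (x : EuclideanSpace ℝ (Fin (m + 1))) :
    ∑ i : Fin m, x i.succ ^ 2 ≤ ‖x‖ ^ 2 := by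
  rw [EuclideanSpace.norm_sq_eq, Fin.sum_univ_succ]
  simp only [Real.norm_eq_abs, sq_abs]
  linarith [sq_nonneg (x 0)]

theorem coordCylinder_subset_realPolar {T : Set (EuclideanSpace ℝ (Fin (m + 1)))}
    {R s : ℝ} (hR : 0 < R) (hs : 0 < s) (hTR : T ⊆ ball 0 R) (hTs : ∀ x ∈ T, x 0 ≤ s) :
    coordCylinder (1 / (2 * s)) (1 / (2 * R)) ⊆ realPolar T := by
  rintro y ⟨⟨hy0, hya⟩, hyb⟩ x hx
  have hfirst : x 0 * y 0 ≤ 1 / 2 := calc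
    x 0 * y 0 ≤ s * (1 / (2 * s)) := mul_le_mul (hTs x hx) hya.le hy0.le hs.le
    _ = 1 / 2 := by field_simp
  have hrest : (∑ i : Fin m, x i.succ * y i.succ) ^ 2 ≤ (1 / 2) ^ 2 := calc
    (∑ i : Fin m, x i.succ * y i.succ) ^ 2
        ≤ (∑ i : Fin m, x i.succ ^ 2) * ∑ i : Fin m, y i.succ ^ 2 :=
      Finset.sum_mul_sq_le_sq_mul_sq _ _ _
    _ ≤ R ^ 2 * (1 / (2 * R)) ^ 2 := by
      have hxR : ‖x‖ < R := mem_ball_zero_iff.mp (hTR hx)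
      have hxsum : ∑ i : Fin m, x i.succ ^ 2 ≤ R ^ 2 :=
        (sum_sq_succ_le_norm_sq x).trans (pow_le_pow_left₀ (norm_nonneg x) hxR.le 2)
      exact mul_le_mul hxsum hyb.le (Finset.sum_nonneg fun _ _ => sq_nonneg _) (sq_nonneg R)
    _ = (1 / 2) ^ 2 := by field_simp
  rw [inner_eq_mul_add_sum_succ]
  linarith [abs_le_of_sq_le_sq' hrest (by norm_num)]

theorem preimage_realPolar_image
    (e : EuclideanSpace ℝ (Fin m) ≃ₗᵢ[ℝ] EuclideanSpace ℝ (Fin m))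
    (S : Set (EuclideanSpace ℝ (Fin m))) : e ⁻¹' realPolar (e '' S) = realPolar S := by
  ext y
  simp [realPolar, LinearIsometryEquiv.inner_map_map]

theorem volume_coordCylinder_le_volume_realPolar {S : Set (EuclideanSpace ℝ (Fin (m + 1)))}
    {R s : ℝ} (hR : 0 < R) (hs : 0 < s) (hSR : S ⊆ ball 0 R)
    {u : EuclideanSpace ℝ (Fin (m + 1))} (hu : ‖u‖ = 1)
    (hSu : ∀ x ∈ S, ⟪x, u⟫ ≤ s) :
    volume (coordCylinder (1 / (2 * s)) (1 / (2 * R)) : Set (EuclideanSpace ℝ (Fin (m + 1))))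
      ≤ volume (realPolar S) := by
  obtain ⟨B, hB⟩ := exists_orthonormalBasis_apply_zero finrank_euclideanSpace_fin hu
  have hBx : ∀ x, B.repr x 0 = ⟪x, u⟫ := fun x => by
    rw [B.repr_apply_apply, hB, real_inner_comm]
  have hT : B.repr '' S ⊆ ball 0 R := by
    rintro _ ⟨x, hx, rfl⟩
    simpa using hSR hx
  calc volume (coordCylinder (1 / (2 * s)) (1 / (2 * R)))
      = volume (B.repr ⁻¹' coordCylinder (1 / (2 * s)) (1 / (2 * R))) :=
        (B.measurePreserving_repr.measure_preimage
          (measurableSet_coordCylinder _ _).nullMeasurableSet).symm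
    _ ≤ volume (B.repr ⁻¹' realPolar (B.repr '' S)) := by
        refine measure_mono (preimage_mono (coordCylinder_subset_realPolar hR hs hT ?_))
        rintro _ ⟨x, hx, rfl⟩
        exact (hBx x).trans_le (hSu x hx)
    _ = volume (realPolar S) := by rw [preimage_realPolar_image]

theorem lt_of_volume_realPolar_lt {S : Set (EuclideanSpace ℝ (Fin (m + 1)))}
    {R c s : ℝ} (hR : 0 < R) (hs : 0 < s) (hSR : S ⊆ ball 0 R)
    (hvol : volume (realPolar S) < ENNReal.ofReal c) {u : EuclideanSpace ℝ (Fin (m + 1))}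
    (hu : ‖u‖ = 1) (hSu : ∀ x ∈ S, ⟪x, u⟫ ≤ s) :
    (volume (ball (0 : EuclideanSpace ℝ (Fin m)) 1)).toReal / (2 * c * (2 * R) ^ m) < s := by
  set V := volume (ball (0 : EuclideanSpace ℝ (Fin m)) 1)
  have hcyl := (volume_coordCylinder_le_volume_realPolar hR hs hSR hu hSu).trans_lt hvol
  rw [volume_coordCylinder (by positivity) (by positivity), ← ENNReal.ofReal_toReal
    measure_ball_lt_top.ne, ← ENNReal.ofReal_mul (by positivity),
    ENNReal.ofReal_lt_ofReal_iff'] at hcyl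
  obtain ⟨hlt, hc⟩ := hcyl
  rw [div_lt_iff₀ (by positivity)]
  calc V.toReal = 1 / (2 * s) * (1 / (2 * R)) ^ m * V.toReal * (2 * s * (2 * R) ^ m) := by
        rw [div_pow, one_pow]
        field_simp
    _ < c * (2 * s * (2 * R) ^ m) := mul_lt_mul_of_pos_right hlt (by positivity)
    _ = s * (2 * c * (2 * R) ^ m) := by ring

theorem nonempty_of_volume_realPolar_ne_top {S : Set (EuclideanSpace ℝ (Fin (m + 1)))}
    (h : volume (realPolar S) ≠ ⊤) : S.Nonempty := by
  rw [nonempty_iff_ne_empty]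
  rintro rfl
  have : realPolar (∅ : Set (EuclideanSpace ℝ (Fin (m + 1)))) = univ := by
    ext; simp [realPolar]
  exact h (this ▸ measure_univ_of_isAddLeftInvariant volume)

theorem ball_subset_closure_of_volume_realPolar_lt {S : Set (EuclideanSpace ℝ (Fin (m + 1)))}
    (hconv : Convex ℝ S) (hne : S.Nonempty) {R c : ℝ} (hR : 0 < R) (hSR : S ⊆ ball 0 R)
    (hvol : volume (realPolar S) < ENNReal.ofReal c) :
    ball 0 ((volume (ball (0 : EuclideanSpace ℝ (Fin m)) 1)).toReal / (2 * c * (2 * R) ^ m))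
      ⊆ closure S := by
  intro z hz
  by_contra hzS
  obtain ⟨u, hu, s, hSu, hzu⟩ :=
    exists_unit_inner_lt_of_notMem hconv.closure isClosed_closure hne.closure hzS
  have hr := pos_of_mem_ball hz
  -- The separating level `s` may be `≤ 0`; raising it to `max s (r / 2)` keeps it a valid bound.
  have hrs := lt_of_volume_realPolar_lt hR (lt_max_of_lt_right (half_pos hr)) hSR hvol hu
    fun x hx => (hSu x (subset_closure hx)).le.trans (le_max_left s _)
  have hzr : ⟪z, u⟫ < _ := (real_inner_le_norm z u).trans_lt
    (by rwa [hu, mul_one, ← mem_ball_zero_iff])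
  exact (max_lt (hzu.trans hzr) (half_lt_self hr)).not_gt hrs

end Polar

theorem stmt15_general {m : ℕ} (S : Set (EuclideanSpace ℝ (Fin (m + 1))))
    (hconv : Convex ℝ S)
    (R c : ℝ) (hR : 0 < R)
    (hSR : S ⊆ Metric.ball 0 R)
    (hvol : volume (realPolar S) < ENNReal.ofReal c) :
    Metric.ball (0 : EuclideanSpace ℝ (Fin (m + 1)))
        ((volume (Metric.ball (0 : EuclideanSpace ℝ (Fin m)) 1)).toReal
          / (2 * c * (2 * R) ^ m))
      ⊆ S := by
  have hne := nonempty_of_volume_realPolar_ne_top (hvol.trans ENNReal.ofReal_lt_top).ne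
  calc _ ⊆ interior (closure S) :=
        interior_maximal (ball_subset_closure_of_volume_realPolar_lt hconv hne hR hSR hvol)
          isOpen_ball
    _ = interior S := hconv.interior_closure_eq_interior
    _ ⊆ S := interior_subset

/-- If `S ⊆ B(0,R)` is a bounded convex subset of `ℝᵏ`
(here `k = m+1`) and `|S°| < c`, then `B(0,r) ⊆ S` with
`r = |B^{k-1}(0,1)| / (2c(2R)^{k-1})`. -/
theorem stmt15 {m : ℕ} (S : Set (EuclideanSpace ℝ (Fin (m + 1))))
    (hconv : Convex ℝ S) (hbdd : Bornology.IsBounded S)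
    (R c : ℝ) (hR : 0 < R) (hc : 0 < c)
    (hSR : S ⊆ Metric.ball 0 R)
    (hvol : volume (realPolar S) < ENNReal.ofReal c) :
    Metric.ball (0 : EuclideanSpace ℝ (Fin (m + 1)))
        ((volume (Metric.ball (0 : EuclideanSpace ℝ (Fin m)) 1)).toReal
          / (2 * c * (2 * R) ^ m))
      ⊆ S :=
  stmt15_general S hconv R c hR hSR hvol
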